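/- Let M_1, M_2, …, M_k be finitely many hom-noetherian right R-hom-modules over a non-unital hom-associative ring R. Then the direct sum M_1 ⊕ … ⊕ M_k, with componentwise scalar multiplication and componentwise twisting map, is a hom-noetherian right R-hom-module. -/

import Mathlib

/-- A non-unital hom-associative ring structure on an additive abelian group `R`:
a biadditive multiplication `mul` and an additive twisting map `α` satisfying
`α a * (b * c) = (a * b) * α c`. -/
structure IsHomRing {R : Type*} [AddCommGroup R] (mul : R → R → R) (α : R → R) : Prop where
  add_mul : ∀ a b c : R, mul (a + b) c = mul a c + mul b c
  mul_add : ∀ a b c : R, mul a (b + c) = mul a b + mul a c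
  alpha_add : ∀ a b : R, α (a + b) = α a + α b
  hom_assoc : ∀ a b c : R, mul (α a) (mul b c) = mul (mul a b) (α c)

/-- A right `R`-hom-module structure on an additive abelian group `M`:
a biadditive scalar multiplication `smul : M → R → M` and an additive map `αM`
satisfying `αM m • (r * s) = (m • r) • αR s`. -/
structure IsHomModule {R M : Type*} [AddCommGroup R] [AddCommGroup M]
    (mul : R → R → R) (αR : R → R) (smul : M → R → M) (αM : M → M) : Prop where
  add_smul : ∀ (m n : M) (r : R), smul (m + n) r = smul m r + smul n r
  smul_add : ∀ (m : M) (r s : R), smul m (r + s) = smul m r + smul m s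
  alpha_add : ∀ m n : M, αM (m + n) = αM m + αM n
  hom_assoc : ∀ (m : M) (r s : R), smul (αM m) (mul r s) = smul (smul m r) (αR s)

/-- A hom-submodule: an additive subgroup (as a set) closed under the scalar
multiplication and invariant under the twisting map. -/
structure IsHomSubmodule {R M : Type*} [AddCommGroup M]
    (smul : M → R → M) (αM : M → M) (N : Set M) : Prop where
  zero_mem : (0 : M) ∈ N
  add_mem : ∀ a b : M, a ∈ N → b ∈ N → a + b ∈ N
  neg_mem : ∀ a : M, a ∈ N → -a ∈ N
  smul_mem : ∀ a : M, a ∈ N → ∀ r : R, smul a r ∈ N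
  alpha_mem : ∀ a : M, a ∈ N → αM a ∈ N

/-- A morphism of right `R`-hom-modules: an additive map commuting with the
twisting maps and preserving scalar multiplication. -/
def IsHomModuleHom {R M M' : Type*} [AddCommGroup M] [AddCommGroup M']
    (smul : M → R → M) (αM : M → M) (smul' : M' → R → M') (αM' : M' → M')
    (f : M → M') : Prop :=
  (∀ a b : M, f (a + b) = f a + f b) ∧ (∀ m : M, f (αM m) = αM' (f m)) ∧
    ∀ (m : M) (r : R), f (smul m r) = smul' (f m) r

/-- A right hom-module is hom-noetherian if it has no infinite strictly
ascending chain of hom-submodules. -/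
def HomNoetherian {R M : Type*} [AddCommGroup M] (smul : M → R → M) (αM : M → M) : Prop :=
  ¬ ∃ c : ℕ → Set M, (∀ n, IsHomSubmodule smul αM (c n)) ∧ ∀ n, c n ⊂ c (n + 1)

/-
A strictly ascending chain of hom-submodules of `M₁ ⊕ (M₂ ⊕ ⋯ ⊕ M_k)` induces two ascending chains:
its images under the projection onto the tail `M₂ ⊕ ⋯ ⊕ M_k` and its preimages under the inclusion
of `M₁`. Both stabilise, and as in the modular law for subgroups a chain `A ⊆ B` with the same image
and the same trace on the kernel of the projection must have `A = B`. Induction on `k` finishes.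
-/

section HomModule

variable {R M : Type*} [AddCommGroup M] {smul : M → R → M} {αM : M → M}

theorem IsHomSubmodule.sub_mem {N : Set M} (hN : IsHomSubmodule smul αM N) {a b : M}
    (ha : a ∈ N) (hb : b ∈ N) : a - b ∈ N := by
  simpa only [sub_eq_add_neg] using hN.add_mem a (-b) ha (hN.neg_mem b hb)

theorem IsHomModule.zero_smul [AddCommGroup R] {mul : R → R → R} {αR : R → R}
    (hM : IsHomModule mul αR smul αM) (r : R) : smul 0 r = 0 :=
  map_zero (AddMonoidHom.mk' (smul · r) fun m n => hM.add_smul m n r)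

theorem IsHomModule.alpha_zero [AddCommGroup R] {mul : R → R → R} {αR : R → R}
    (hM : IsHomModule mul αR smul αM) : αM 0 = 0 :=
  map_zero (AddMonoidHom.mk' αM hM.alpha_add)

theorem HomNoetherian.of_subsingleton [Subsingleton M] : HomNoetherian smul αM := by
  rintro ⟨c, hc, hlt⟩
  obtain ⟨x, -, hx⟩ := Set.exists_of_ssubset (hlt 0)
  exact hx (Subsingleton.elim 0 x ▸ (hc 0).zero_mem)

theorem HomNoetherian.wellFoundedGT (h : HomNoetherian smul αM) :
    WellFoundedGT {N : Set M // IsHomSubmodule smul αM N} := by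
  rw [WellFoundedGT, isWellFounded_iff, RelEmbedding.wellFounded_iff_isEmpty]
  exact ⟨fun f => h ⟨fun n => f n, fun n => (f n).2, fun n => f.map_rel_iff.2 n.lt_succ_self⟩⟩

theorem HomNoetherian.eventually_succ_eq (h : HomNoetherian smul αM) {c : ℕ → Set M}
    (hc : ∀ n, IsHomSubmodule smul αM (c n)) (hmono : Monotone c) :
    ∀ᶠ n in Filter.atTop, c (n + 1) = c n := by
  have := h.wellFoundedGT
  obtain ⟨n, hn⟩ := WellFoundedGT.monotone_chain_condition
    (⟨fun n => ⟨c n, hc n⟩, hmono⟩ : ℕ →o {N : Set M // IsHomSubmodule smul αM N})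
  exact Filter.eventually_atTop.2
    ⟨n, fun m hm => congrArg Subtype.val ((hn (m + 1) (by omega)).symm.trans (hn m hm))⟩

variable {M' : Type*} [AddCommGroup M'] {smul' : M' → R → M'} {αM' : M' → M'} {f : M → M'}

theorem IsHomModuleHom.map_zero (hf : IsHomModuleHom smul αM smul' αM' f) : f 0 = 0 :=
  _root_.map_zero (AddMonoidHom.mk' f hf.1)

theorem IsHomModuleHom.map_neg (hf : IsHomModuleHom smul αM smul' αM' f) (a : M) : f (-a) = -f a :=
  _root_.map_neg (AddMonoidHom.mk' f hf.1) a

theorem IsHomModuleHom.map_sub (hf : IsHomModuleHom smul αM smul' αM' f) (a b : M) :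
    f (a - b) = f a - f b :=
  _root_.map_sub (AddMonoidHom.mk' f hf.1) a b

theorem IsHomSubmodule.image {N : Set M} (hN : IsHomSubmodule smul αM N)
    (hf : IsHomModuleHom smul αM smul' αM' f) : IsHomSubmodule smul' αM' (f '' N) where
  zero_mem := ⟨0, hN.zero_mem, hf.map_zero⟩
  add_mem := by
    rintro _ _ ⟨a, ha, rfl⟩ ⟨b, hb, rfl⟩
    exact ⟨a + b, hN.add_mem a b ha hb, hf.1 a b⟩
  neg_mem := by
    rintro _ ⟨a, ha, rfl⟩
    exact ⟨-a, hN.neg_mem a ha, hf.map_neg a⟩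
  smul_mem := by
    rintro _ ⟨a, ha, rfl⟩ r
    exact ⟨smul a r, hN.smul_mem a ha r, hf.2.2 a r⟩
  alpha_mem := by
    rintro _ ⟨a, ha, rfl⟩
    exact ⟨αM a, hN.alpha_mem a ha, hf.2.1 a⟩

theorem IsHomSubmodule.preimage {N : Set M'} (hN : IsHomSubmodule smul' αM' N)
    (hf : IsHomModuleHom smul αM smul' αM' f) : IsHomSubmodule smul αM (f ⁻¹' N) where
  zero_mem := by
    simpa only [Set.mem_preimage, hf.map_zero] using hN.zero_mem
  add_mem a b ha hb := by
    simpa only [Set.mem_preimage, hf.1] using hN.add_mem _ _ ha hb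
  neg_mem a ha := by
    simpa only [Set.mem_preimage, hf.map_neg] using hN.neg_mem _ ha
  smul_mem a ha r := by
    simpa only [Set.mem_preimage, hf.2.2] using hN.smul_mem _ ha r
  alpha_mem a ha := by
    simpa only [Set.mem_preimage, hf.2.1] using hN.alpha_mem _ ha

variable {K : Type*} {g : K → M}

theorem IsHomSubmodule.subset_of_image_subset_of_preimage_subset {A B : Set M}
    (hA : IsHomSubmodule smul αM A) (hB : IsHomSubmodule smul αM B) (hAB : A ⊆ B)
    (hf : IsHomModuleHom smul αM smul' αM' f) (hexact : ∀ x, f x = 0 → x ∈ Set.range g)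
    (himage : f '' B ⊆ f '' A) (hpreimage : g ⁻¹' B ⊆ g ⁻¹' A) : B ⊆ A := by
  intro x hx
  obtain ⟨y, hy, hxy⟩ := himage ⟨x, hx, rfl⟩
  obtain ⟨z, hz⟩ := hexact (x - y) (by rw [hf.map_sub, hxy, sub_self])
  have hzA : g z ∈ A := hpreimage (show g z ∈ B from hz ▸ hB.sub_mem hx (hAB hy))
  simpa only [hz, sub_add_cancel] using hA.add_mem _ y hzA hy

variable [AddCommGroup K] {smulK : K → R → K} {αK : K → K}

theorem HomNoetherian.of_exact (hf : IsHomModuleHom smul αM smul' αM' f)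
    (hg : IsHomModuleHom smulK αK smul αM g) (hexact : ∀ x, f x = 0 → x ∈ Set.range g)
    (hK : HomNoetherian smulK αK) (hM' : HomNoetherian smul' αM') : HomNoetherian smul αM := by
  rintro ⟨c, hc, hlt⟩
  have hmono : Monotone c := monotone_nat_of_le_succ fun n => (hlt n).subset
  obtain ⟨n, himage, hpreimage⟩ :=
    ((hM'.eventually_succ_eq (fun n => (hc n).image hf) fun _ _ h => Set.image_mono (hmono h)).and
      (hK.eventually_succ_eq (fun n => (hc n).preimage hg)
        fun _ _ h => Set.preimage_mono (hmono h))).exists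
  exact (hlt n).not_subset ((hc n).subset_of_image_subset_of_preimage_subset (hc (n + 1))
    (hlt n).subset hf hexact himage.subset hpreimage.subset)

end HomModule

section Pi

variable {R ι : Type*} {M : ι → Type*} [∀ i, AddCommGroup (M i)]

def piSMul (smul : ∀ i, M i → R → M i) : (∀ i, M i) → R → ∀ i, M i :=
  fun x r i => smul i (x i) r

def piAlpha (αs : ∀ i, M i → M i) : (∀ i, M i) → ∀ i, M i :=
  fun x i => αs i (x i)

theorem isHomModuleHom_piSingle [AddCommGroup R] [DecidableEq ι] {mul : R → R → R}
    {αR : R → R} {smul : ∀ i, M i → R → M i} {αs : ∀ i, M i → M i}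
    (hM : ∀ i, IsHomModule mul αR (smul i) (αs i)) (i : ι) :
    IsHomModuleHom (smul i) (αs i) (piSMul smul) (piAlpha αs) (Pi.single i) :=
  ⟨Pi.single_add i, fun m => Pi.single_op αs (fun j => (hM j).alpha_zero) i m,
    fun m r => Pi.single_op (fun j x => smul j x r) (fun j => (hM j).zero_smul r) i m⟩

end Pi

section FinTail

variable {R : Type*} {k : ℕ} {M : Fin (k + 1) → Type*} [∀ i, AddCommGroup (M i)]

theorem isHomModuleHom_tail (smul : ∀ i, M i → R → M i) (αs : ∀ i, M i → M i) :
    IsHomModuleHom (piSMul smul) (piAlpha αs) (piSMul fun i => smul i.succ)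
      (piAlpha fun i => αs i.succ) Fin.tail :=
  ⟨fun _ _ => rfl, fun _ => rfl, fun _ _ => rfl⟩

theorem exists_single_eq_of_tail_eq_zero {x : ∀ i, M i} (hx : Fin.tail x = 0) :
    x ∈ Set.range (Pi.single 0) := by
  refine ⟨x 0, funext fun i => Fin.cases (Pi.single_eq_same 0 (x 0)) (fun j => ?_) i⟩
  rw [Pi.single_eq_of_ne (Fin.succ_ne_zero j)]
  exact (congrFun hx j).symm

end FinTail

theorem directSum_homNoetherian_general {R : Type*} [AddCommGroup R]
    (mul : R → R → R) (αR : R → R)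
    {k : ℕ} {M : Fin k → Type*} [∀ i, AddCommGroup (M i)]
    (smul : ∀ i : Fin k, M i → R → M i) (αs : ∀ i : Fin k, M i → M i)
    (hM : ∀ i : Fin k, IsHomModule mul αR (smul i) (αs i))
    (hnoeth : ∀ i : Fin k, HomNoetherian (smul i) (αs i)) :
    HomNoetherian (fun (x : ∀ i, M i) (r : R) (i : Fin k) => smul i (x i) r)
      (fun (x : ∀ i, M i) (i : Fin k) => αs i (x i)) := by
  induction k with
  | zero => exact .of_subsingleton
  | succ k ih =>
    exact .of_exact (isHomModuleHom_tail smul αs) (isHomModuleHom_piSingle hM 0)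
      (fun _ => exists_single_eq_of_tail_eq_zero) (hnoeth 0)
      (ih _ _ (fun i => hM i.succ) fun i => hnoeth i.succ)

/-- a finite direct sum of hom-noetherian right R-hom-modules, with
componentwise scalar multiplication and componentwise twisting map, is a
hom-noetherian right R-hom-module. -/
theorem directSum_homNoetherian {R : Type*} [AddCommGroup R]
    (mul : R → R → R) (αR : R → R) (hR : IsHomRing mul αR)
    {k : ℕ} {M : Fin k → Type*} [∀ i, AddCommGroup (M i)]
    (smul : ∀ i : Fin k, M i → R → M i) (αs : ∀ i : Fin k, M i → M i)
    (hM : ∀ i : Fin k, IsHomModule mul αR (smul i) (αs i))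
    (hnoeth : ∀ i : Fin k, HomNoetherian (smul i) (αs i)) :
    HomNoetherian (fun (x : ∀ i, M i) (r : R) (i : Fin k) => smul i (x i) r)
      (fun (x : ∀ i, M i) (i : Fin k) => αs i (x i)) :=
  directSum_homNoetherian_general mul αR smul αs hM hnoeth
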